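/- arXiv:math/0509364 — 2 statements merged into one kernel-verified Lean document; each statement's English description precedes it below -/
import Mathlib

section
/- Suppose ρ₀ is a smooth positive function on [0, 2π] with ∫₀^{2π} (−g ρ₀'(x)) dx > 0, where g > 0 and B₀ is a real constant. Then the supremum over nonzero v ∈ H¹ of the 2D periodic domain D = [0,2π]² of the ratio [∬_D (−g ρ₀'(x) v² − B₀² v_x²) dx dy] / [∬_D ρ₀ v² dx dy] is strictly positive. -/
open MeasureTheory Real

lemma deriv_slice {v : ℝ → ℝ → ℝ} (hv : ContDiff ℝ 1 (fun p : ℝ × ℝ => v p.1 p.2))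
    (x y : ℝ) :
    deriv (fun t => v t y) x = fderiv ℝ (fun p : ℝ × ℝ => v p.1 p.2) (x, y) (1, 0) := by
  have h1 : HasDerivAt (fun t : ℝ => ((t, y) : ℝ × ℝ)) (1, 0) x :=
    (hasDerivAt_id x).prodMk (hasDerivAt_const x y)
  have h2 := ((hv.differentiable one_ne_zero (x, y)).hasFDerivAt).comp_hasDerivAt x h1
  exact h2.deriv

lemma dv_cont {v : ℝ → ℝ → ℝ} (hv : ContDiff ℝ 1 (fun p : ℝ × ℝ => v p.1 p.2)) :
    Continuous fun p : ℝ × ℝ => deriv (fun t => v t p.2) p.1 := by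
  have : Continuous fun p : ℝ × ℝ =>
      fderiv ℝ (fun q : ℝ × ℝ => v q.1 q.2) p (1, 0) :=
    (hv.continuous_fderiv one_ne_zero).clm_apply continuous_const
  refine this.congr fun p => ?_
  exact (deriv_slice hv p.1 p.2).symm

/-- Positivity of the spectral radius Λ² for the case `B₀ ∥ g`, incompressible fluids:
if the density gradient has negative average, the supremum of the Rayleigh quotient
over (H¹-regular) periodic functions on the square `D = [0,2π]²` is strictly positive. -/
theorem spectral_radius_pos_parallel (g B₀ c : ℝ) (hg : 0 < g) (hc : 0 < c)
    (ρ : ℝ → ℝ) (hρ : ContDiff ℝ (⊤ : ℕ∞) ρ) (hmin : ∀ x, c ≤ ρ x)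
    (havg : 0 < ∫ x in (0:ℝ)..(2 * π), -g * deriv ρ x) :
    0 < sSup { r : ℝ | ∃ v : ℝ → ℝ → ℝ,
      ContDiff ℝ 1 (fun p : ℝ × ℝ => v p.1 p.2) ∧
      (∀ y, Function.Periodic (fun x => v x y) (2 * π)) ∧
      (∀ x, Function.Periodic (fun y => v x y) (2 * π)) ∧
      (0 < ∫ x in (0:ℝ)..(2 * π), ∫ y in (0:ℝ)..(2 * π), ρ x * (v x y) ^ 2) ∧
      r = (∫ x in (0:ℝ)..(2 * π), ∫ y in (0:ℝ)..(2 * π),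
              (-g * deriv ρ x * (v x y) ^ 2 - B₀ ^ 2 * (deriv (fun t => v t y) x) ^ 2)) /
          (∫ x in (0:ℝ)..(2 * π), ∫ y in (0:ℝ)..(2 * π), ρ x * (v x y) ^ 2) } := by
  have hπ : (0:ℝ) < 2 * π := by positivity
  have hρd : Continuous (deriv ρ) := hρ.continuous_deriv (by simp)
  -- the value attained at v ≡ 1
  set S := { r : ℝ | ∃ v : ℝ → ℝ → ℝ,
      ContDiff ℝ 1 (fun p : ℝ × ℝ => v p.1 p.2) ∧
      (∀ y, Function.Periodic (fun x => v x y) (2 * π)) ∧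
      (∀ x, Function.Periodic (fun y => v x y) (2 * π)) ∧
      (0 < ∫ x in (0:ℝ)..(2 * π), ∫ y in (0:ℝ)..(2 * π), ρ x * (v x y) ^ 2) ∧
      r = (∫ x in (0:ℝ)..(2 * π), ∫ y in (0:ℝ)..(2 * π),
              (-g * deriv ρ x * (v x y) ^ 2 - B₀ ^ 2 * (deriv (fun t => v t y) x) ^ 2)) /
          (∫ x in (0:ℝ)..(2 * π), ∫ y in (0:ℝ)..(2 * π), ρ x * (v x y) ^ 2) } with hS
  -- denominator for v ≡ 1
  have hDden : (∫ x in (0:ℝ)..(2 * π), ∫ y in (0:ℝ)..(2 * π),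
      ρ x * ((fun _ _ => (1:ℝ)) x y) ^ 2) = (2*π) * ∫ x in (0:ℝ)..(2*π), ρ x := by
    simp only [one_pow, mul_one, intervalIntegral.integral_const, sub_zero, smul_eq_mul]
    exact intervalIntegral.integral_const_mul _ _
  have hρint : IntervalIntegrable ρ volume 0 (2*π) := hρ.continuous.intervalIntegrable _ _
  have hρpos : 0 < ∫ x in (0:ℝ)..(2*π), ρ x := by
    have h1 : (∫ x in (0:ℝ)..(2*π), c) ≤ ∫ x in (0:ℝ)..(2*π), ρ x := by
      apply intervalIntegral.integral_mono_on hπ.le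
        (intervalIntegrable_const) hρint (fun x _ => hmin x)
    have : (∫ x in (0:ℝ)..(2*π), c) = (2*π) * c := by simp [mul_comm]
    nlinarith
  have hden1 : 0 < ∫ x in (0:ℝ)..(2 * π), ∫ y in (0:ℝ)..(2 * π),
      ρ x * ((fun _ _ => (1:ℝ)) x y) ^ 2 := by
    rw [hDden]; positivity
  -- numerator for v ≡ 1
  have hNum : (∫ x in (0:ℝ)..(2 * π), ∫ y in (0:ℝ)..(2 * π),
      (-g * deriv ρ x * ((fun _ _ => (1:ℝ)) x y) ^ 2
        - B₀ ^ 2 * (deriv (fun t => (fun _ _ => (1:ℝ)) t y) x) ^ 2))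
      = (2*π) * ∫ x in (0:ℝ)..(2*π), -g * deriv ρ x := by
    have h0 : ∀ x y : ℝ, (-g * deriv ρ x * ((fun _ _ => (1:ℝ)) x y) ^ 2
        - B₀ ^ 2 * (deriv (fun t => (fun _ _ => (1:ℝ)) t y) x) ^ 2) = -g * deriv ρ x := by
      intro x y; simp
    calc (∫ x in (0:ℝ)..(2 * π), ∫ y in (0:ℝ)..(2 * π),
          (-g * deriv ρ x * ((fun _ _ => (1:ℝ)) x y) ^ 2
            - B₀ ^ 2 * (deriv (fun t => (fun _ _ => (1:ℝ)) t y) x) ^ 2))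
        = ∫ x in (0:ℝ)..(2 * π), (2*π) * (-g * deriv ρ x) := by
          refine intervalIntegral.integral_congr fun x _ => ?_
          rw [intervalIntegral.integral_congr (g := fun _ : ℝ => -g * deriv ρ x)
            (fun y _ => h0 x y), intervalIntegral.integral_const, smul_eq_mul, sub_zero]
      _ = (2*π) * ∫ x in (0:ℝ)..(2*π), -g * deriv ρ x :=
          intervalIntegral.integral_const_mul _ _
  set r₀ := (∫ x in (0:ℝ)..(2 * π), ∫ y in (0:ℝ)..(2 * π),
              (-g * deriv ρ x * ((fun _ _ => (1:ℝ)) x y) ^ 2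
                - B₀ ^ 2 * (deriv (fun t => (fun _ _ => (1:ℝ)) t y) x) ^ 2)) /
          (∫ x in (0:ℝ)..(2 * π), ∫ y in (0:ℝ)..(2 * π),
              ρ x * ((fun _ _ => (1:ℝ)) x y) ^ 2) with hr₀
  have hr₀mem : r₀ ∈ S := by
    refine ⟨fun _ _ => (1:ℝ), contDiff_const, fun y => fun x => rfl, fun x => fun y => rfl,
      hden1, rfl⟩
  have hr₀pos : 0 < r₀ := by
    rw [hr₀, hNum]
    exact div_pos (by positivity) hden1
  -- bound above
  obtain ⟨x₀, hx₀, hmax⟩ := (isCompact_Icc (a := (0:ℝ)) (b := 2*π)).exists_isMaxOn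
    ⟨0, by constructor <;> [rfl; positivity]⟩ ((continuous_const.mul hρd).continuousOn)
  set M := max (-g * deriv ρ x₀) 0 with hM
  have hM0 : 0 ≤ M := le_max_right _ _
  have hMb : ∀ x ∈ Set.Icc (0:ℝ) (2*π), -g * deriv ρ x ≤ M :=
    fun x hx => le_trans (hmax hx) (le_max_left _ _)
  have hbdd : BddAbove S := by
    refine ⟨M / c, ?_⟩
    rintro r ⟨v, hv, -, -, hD, rfl⟩
    have hFc : Continuous (fun p : ℝ × ℝ => v p.1 p.2) := hv.continuous
    have hdvc : Continuous fun p : ℝ × ℝ => deriv (fun t => v t p.2) p.1 := dv_cont hv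
    -- continuity of integrands and inner integrals
    have hnumc : Continuous (Function.uncurry fun x y =>
        -g * deriv ρ x * (v x y) ^ 2 - B₀ ^ 2 * (deriv (fun t => v t y) x) ^ 2) := by
      apply Continuous.sub
      · exact (continuous_const.mul (hρd.comp continuous_fst)).mul (hFc.pow 2)
      · exact continuous_const.mul (hdvc.pow 2)
    have hdenc : Continuous (Function.uncurry fun x y => M / c * (ρ x * (v x y) ^ 2)) := by
      exact continuous_const.mul ((hρ.continuous.comp continuous_fst).mul (hFc.pow 2))
    have hNi : Continuous fun x => ∫ y in (0:ℝ)..(2*π),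
        (-g * deriv ρ x * (v x y) ^ 2 - B₀ ^ 2 * (deriv (fun t => v t y) x) ^ 2) :=
      intervalIntegral.continuous_parametric_intervalIntegral_of_continuous' hnumc 0 (2*π)
    have hDi : Continuous fun x => ∫ y in (0:ℝ)..(2*π), M / c * (ρ x * (v x y) ^ 2) :=
      intervalIntegral.continuous_parametric_intervalIntegral_of_continuous' hdenc 0 (2*π)
    -- inner pointwise bound
    have key : (∫ x in (0:ℝ)..(2*π), ∫ y in (0:ℝ)..(2*π),
        (-g * deriv ρ x * (v x y) ^ 2 - B₀ ^ 2 * (deriv (fun t => v t y) x) ^ 2))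
        ≤ ∫ x in (0:ℝ)..(2*π), ∫ y in (0:ℝ)..(2*π), M / c * (ρ x * (v x y) ^ 2) := by
      apply intervalIntegral.integral_mono_on hπ.le (hNi.intervalIntegrable _ _)
        (hDi.intervalIntegrable _ _)
      intro x hx
      apply intervalIntegral.integral_mono_on hπ.le
        ((hnumc.comp (Continuous.prodMk_right x)).intervalIntegrable _ _)
        ((hdenc.comp (Continuous.prodMk_right x)).intervalIntegrable _ _)
      intro y hy
      have h1 : -g * deriv ρ x * (v x y) ^ 2 - B₀ ^ 2 * (deriv (fun t => v t y) x) ^ 2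
          ≤ M * (v x y) ^ 2 := by
        nlinarith [sq_nonneg (v x y), sq_nonneg (deriv (fun t => v t y) x), hMb x hx,
          sq_nonneg (B₀ * deriv (fun t => v t y) x)]
      have h2 : M * (v x y) ^ 2 ≤ M / c * (ρ x * (v x y) ^ 2) := by
        have := mul_le_mul_of_nonneg_left
          (mul_le_mul_of_nonneg_right (hmin x) (sq_nonneg (v x y)))
          (div_nonneg hM0 hc.le)
        calc M * (v x y) ^ 2 = M / c * (c * (v x y) ^ 2) := by field_simp
          _ ≤ M / c * (ρ x * (v x y) ^ 2) := this
      simp only [Function.comp_apply, Function.uncurry_apply_pair]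
      linarith
    have hMcD : (∫ x in (0:ℝ)..(2*π), ∫ y in (0:ℝ)..(2*π), M / c * (ρ x * (v x y) ^ 2))
        = M / c * ∫ x in (0:ℝ)..(2*π), ∫ y in (0:ℝ)..(2*π), ρ x * (v x y) ^ 2 := by
      rw [← intervalIntegral.integral_const_mul]
      exact intervalIntegral.integral_congr fun x _ => intervalIntegral.integral_const_mul _ _
    rw [div_le_iff₀ hD]
    calc _ ≤ _ := key
      _ = _ := hMcD
      _ = _ := by ring
  exact lt_csSup_of_lt hbdd hr₀mem hr₀pos
end

section
/- For smooth positive ρ₀, p₀ on (0,2π), constant B₀ ≠ 0, γ > 1, and g real, the quadratic form H(u₁,u₁') := (1/(γ p₀ + B₀²))(g ρ₀ u₁ − B₀² u₁')² − g ρ₀' u₁² − B₀² (u₁')² satisfies, under the steady-state relation p₀' = ρ₀ g (with constant B₀), the identity H(u₁,u₁') = −(B₀²/((γ p₀ + B₀²) γ p₀)) (g ρ₀ u₁ + γ p₀ u₁')², and in particular H(u₁,u₁') ≤ 0 pointwise. -/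
open Real

/-- Linear stability (Λ² < 0) for compressible fluid with magnetic field parallel to gravity:
under the polytropic law `p₀ = C ρ₀^γ` and hydrostatic balance `p₀' = ρ₀ g`
(with constant B₀ ≠ 0), the quadratic form
`H(u₁,u₁') = (1/(γp₀+B₀²))(gρ₀u₁ − B₀²u₁')² − gρ₀'u₁² − B₀²(u₁')²`
equals `−(B₀²/((γp₀+B₀²)γp₀))(gρ₀u₁ + γp₀u₁')²`, hence is nonpositive pointwise. -/
theorem H_neg_parallel_compressible (γ g C B₀ : ℝ) (hγ : 1 < γ) (hB : B₀ ≠ 0)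
    (ρ p₀ : ℝ → ℝ) (hρ : ContDiff ℝ (⊤ : ℕ∞) ρ) (hρpos : ∀ x, 0 < ρ x) (hppos : ∀ x, 0 < p₀ x)
    (hpoly : ∀ x, p₀ x = C * ρ x ^ γ)
    (hsteady : ∀ x, deriv p₀ x = ρ x * g) :
    ∀ x u₁ u₁' : ℝ,
      (1 / (γ * p₀ x + B₀ ^ 2)) * (g * ρ x * u₁ - B₀ ^ 2 * u₁') ^ 2
          - g * deriv ρ x * u₁ ^ 2 - B₀ ^ 2 * u₁' ^ 2
        = -(B₀ ^ 2 / ((γ * p₀ x + B₀ ^ 2) * (γ * p₀ x)))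
            * (g * ρ x * u₁ + γ * p₀ x * u₁') ^ 2 ∧
      (1 / (γ * p₀ x + B₀ ^ 2)) * (g * ρ x * u₁ - B₀ ^ 2 * u₁') ^ 2
          - g * deriv ρ x * u₁ ^ 2 - B₀ ^ 2 * u₁' ^ 2 ≤ 0 := by
  intro x u₁ u₁'
  -- compute the derivative of p₀ via the polytropic law
  have hdρ : HasDerivAt ρ (deriv ρ x) x :=
    ((hρ.differentiable (by simp)) x).hasDerivAt
  have hdp : HasDerivAt p₀ (C * (deriv ρ x * γ * ρ x ^ (γ - 1))) x := by
    have h1 : HasDerivAt (fun y => ρ y ^ γ) (deriv ρ x * γ * ρ x ^ (γ - 1)) x :=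
      hdρ.rpow_const (Or.inl (ne_of_gt (hρpos x)))
    have h2 := h1.const_mul C
    refine h2.congr_of_eventuallyEq ?_
    filter_upwards with y using hpoly y
  -- relation: γ p₀ ρ' = ρ² g
  have key : γ * p₀ x * deriv ρ x = ρ x ^ 2 * g := by
    have h := hsteady x
    rw [hdp.deriv] at h
    have hρx := (hρpos x).ne'
    have hrpow : ρ x ^ (γ - 1) = ρ x ^ γ / ρ x := by
      rw [Real.rpow_sub (hρpos x), Real.rpow_one]
    have hp : p₀ x = C * ρ x ^ γ := hpoly x
    rw [hrpow] at h
    field_simp at h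
    rw [hp]
    nlinarith [h]
  have hγp : 0 < γ * p₀ x := mul_pos (by linarith) (hppos x)
  have hden : 0 < γ * p₀ x + B₀ ^ 2 := by positivity
  have hp0 : p₀ x ≠ 0 := (hppos x).ne'
  have hγ0 : γ ≠ 0 := by linarith
  have hρ' : deriv ρ x = ρ x ^ 2 * g / (γ * p₀ x) := by
    field_simp
    linarith [key]
  constructor
  · rw [hρ']
    field_simp
    ring
  · rw [hρ']
    have h1 : (1 / (γ * p₀ x + B₀ ^ 2)) * (g * ρ x * u₁ - B₀ ^ 2 * u₁') ^ 2
          - g * (ρ x ^ 2 * g / (γ * p₀ x)) * u₁ ^ 2 - B₀ ^ 2 * u₁' ^ 2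
        = -(B₀ ^ 2 / ((γ * p₀ x + B₀ ^ 2) * (γ * p₀ x)))
            * (g * ρ x * u₁ + γ * p₀ x * u₁') ^ 2 := by
      field_simp
      ring
    rw [h1]
    have : 0 ≤ B₀ ^ 2 / ((γ * p₀ x + B₀ ^ 2) * (γ * p₀ x)) := by positivity
    nlinarith [sq_nonneg (g * ρ x * u₁ + γ * p₀ x * u₁')]
end
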